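/- arXiv:1912.06116 — 9 statements merged into one kernel-verified Lean document; each statement's English description precedes it below -/
import Mathlib

section
/- If f:[0,1]→[0,∞] is a decreasing function with ∫₀¹ f(p) dp ≤ 1, then for any probability space and any random variable P with Q(P ≤ ε) ≤ ε for all ε ∈ (0,1), we have E[f(P)] ≤ 1. -/
/-!
The condition on a p-variable says that its law is stochastically larger than the uniform law on
`[0, 1]`: `Q (P ≤ x) ≤ x` for every `x` (at `x = 0` by right continuity). A superlevel set of the
decreasing `f` is an initial segment, so it carries no more mass under the law of `P` than its
part in `[0, 1]` carries under Lebesgue measure; integrating over the levels with the layer cake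
formula gives `E[f(P)] ≤ ∫₀¹ f ≤ 1`.
-/

open MeasureTheory Set Filter Topology
open scoped ENNReal

theorem volume_setOf_ofReal_lt_inter_Ioi (x : ℝ≥0∞) :
    volume ({t : ℝ | ENNReal.ofReal t < x} ∩ Ioi 0) = x := by
  rcases eq_or_ne x ∞ with rfl | hx
  · simp [ENNReal.ofReal_lt_top]
  · have : {t : ℝ | ENNReal.ofReal t < x} ∩ Ioi 0 = Ioo 0 x.toReal := by
      ext t
      simp only [mem_inter_iff, mem_ofPred_eq, mem_Ioi, mem_Ioo]
      exact ⟨fun ⟨h, ht⟩ => ⟨ht, (ENNReal.ofReal_lt_iff_lt_toReal ht.le hx).mp h⟩,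
        fun ⟨ht, h⟩ => ⟨(ENNReal.ofReal_lt_iff_lt_toReal ht.le hx).mpr h, ht⟩⟩
    rw [this, Real.volume_Ioo, sub_zero, ENNReal.ofReal_toReal hx]

theorem lintegral_eq_lintegral_meas_ofReal_lt {α : Type*} [MeasurableSpace α] (μ : Measure α)
    [SFinite μ] {g : α → ℝ≥0∞} (hg : Measurable g) :
    ∫⁻ a, g a ∂μ = ∫⁻ t in Ioi 0, μ {a | ENNReal.ofReal t < g a} := by
  have hE : MeasurableSet {p : α × ℝ | ENNReal.ofReal p.2 < g p.1} :=
    measurableSet_lt (ENNReal.measurable_ofReal.comp measurable_snd) (hg.comp measurable_fst)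
  calc ∫⁻ a, g a ∂μ
      = ∫⁻ a, volume.restrict (Ioi 0) {t : ℝ | ENNReal.ofReal t < g a} ∂μ := by
        refine lintegral_congr fun a => ?_
        rw [Measure.restrict_apply' measurableSet_Ioi, volume_setOf_ofReal_lt_inter_Ioi]
    _ = μ.prod (volume.restrict (Ioi 0)) {p | ENNReal.ofReal p.2 < g p.1} :=
        (Measure.prod_apply hE).symm
    _ = ∫⁻ t in Ioi 0, μ {a | ENNReal.ofReal t < g a} := Measure.prod_apply_symm hE

theorem measure_le_volume_inter_Icc_of_isLowerSet {μ : Measure ℝ}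
    [IsZeroOrProbabilityMeasure μ] (hμ : ∀ x, μ (Iic x) ≤ ENNReal.ofReal x) {S : Set ℝ}
    (hS : IsLowerSet S) : μ S ≤ volume (S ∩ Icc 0 1) := by
  by_cases h1 : 1 ∈ S
  · rw [inter_eq_right.mpr (Icc_subset_Iic_self.trans (hS.Iic_subset h1)), Real.volume_Icc]
    simpa using prob_le_one
  rcases S.eq_empty_or_nonempty with rfl | hne
  · simp
  have hlt : S ⊆ Iio 1 := fun x hx => not_le.mp fun h => h1 (hS h hx)
  have hbdd : BddAbove S := ⟨1, fun x hx => (hlt hx).le⟩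
  set m := sSup S
  have hIoo : Ioo 0 m ⊆ S ∩ Icc 0 1 := fun y ⟨hy0, hym⟩ => by
    obtain ⟨x, hx, hyx⟩ := exists_lt_of_lt_csSup hne hym
    exact ⟨hS hyx.le hx, hy0.le, (hyx.trans (hlt hx)).le⟩
  calc μ S ≤ μ (Iic m) := measure_mono fun x hx => le_csSup hbdd hx
    _ ≤ ENNReal.ofReal m := hμ m
    _ = volume (Ioo 0 m) := by rw [Real.volume_Ioo, sub_zero]
    _ ≤ volume (S ∩ Icc 0 1) := measure_mono hIoo

theorem lintegral_le_setLIntegral_Icc_of_antitone {μ : Measure ℝ}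
    [IsZeroOrProbabilityMeasure μ] (hμ : ∀ x, μ (Iic x) ≤ ENNReal.ofReal x) {F : ℝ → ℝ≥0∞}
    (hF : Antitone F) : ∫⁻ x, F x ∂μ ≤ ∫⁻ x in Icc 0 1, F x := by
  rw [lintegral_eq_lintegral_meas_ofReal_lt μ hF.measurable,
    lintegral_eq_lintegral_meas_ofReal_lt _ hF.measurable]
  refine lintegral_mono fun t => ?_
  have hS : IsLowerSet {x | ENNReal.ofReal t < F x} := fun _ _ hyx hx => hx.trans_le (hF hyx)
  exact (measure_le_volume_inter_Icc_of_isLowerSet hμ hS).trans_eq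
    (Measure.restrict_apply (hF.measurable measurableSet_Ioi)).symm

theorem measure_setOf_le_le_ofReal {Ω : Type*} [MeasurableSpace Ω] {Q : Measure Ω}
    [IsZeroOrProbabilityMeasure Q] {P : Ω → ℝ}
    (hP : ∀ ε ∈ Ioo (0:ℝ) 1, Q {ω | P ω ≤ ε} ≤ ENNReal.ofReal ε) (x : ℝ) :
    Q {ω | P ω ≤ x} ≤ ENNReal.ofReal x := by
  rcases le_or_gt 1 x with hx | hx
  · exact prob_le_one.trans (ENNReal.one_le_ofReal.mpr hx)
  set y := max x 0
  have hy : y < 1 := max_lt hx zero_lt_one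
  have hlim : Tendsto ENNReal.ofReal (𝓝[>] y) (𝓝 (ENNReal.ofReal y)) :=
    ENNReal.continuous_ofReal.continuousAt.tendsto.mono_left nhdsWithin_le_nhds
  have hbound : ∀ᶠ ε in 𝓝[>] y, Q {ω | P ω ≤ x} ≤ ENNReal.ofReal ε := by
    filter_upwards [Ioo_mem_nhdsGT hy] with ε hε
    exact (measure_mono fun ω (h : P ω ≤ x) => h.trans ((le_max_left x 0).trans hε.1.le)).trans
      (hP ε ⟨(le_max_right x 0).trans_lt hε.1, hε.2⟩)
  simpa [y, ENNReal.ofReal_max] using ge_of_tendsto hlim hbound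

theorem AntitoneOn.antitone_comp_projIcc {α β : Type*} [LinearOrder α] [Preorder β] {f : α → β}
    {a b : α} (h : a ≤ b) (hf : AntitoneOn f (Icc a b)) : Antitone fun x => f (projIcc a b h x) :=
  fun _ _ hxy => hf (projIcc a b h _).2 (projIcc a b h _).2 (monotone_projIcc h hxy)

/-- If `f : [0,1] → [0,∞]` is decreasing with `∫₀¹ f ≤ 1`, then for any
probability space and any p-variable `P`, `E[f(P)] ≤ 1`. -/
theorem calibrator_of_integral_le_one
    {Ω : Type*} [MeasurableSpace Ω] (Q : Measure Ω) [IsProbabilityMeasure Q]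
    (f : ℝ → ℝ≥0∞) (hf : AntitoneOn f (Set.Icc 0 1))
    (hint : ∫⁻ p in Set.Icc (0:ℝ) 1, f p ≤ 1)
    (P : Ω → ℝ) (hPmeas : Measurable P) (hP01 : ∀ ω, P ω ∈ Set.Icc (0:ℝ) 1)
    (hP : ∀ ε ∈ Set.Ioo (0:ℝ) 1, Q {ω | P ω ≤ ε} ≤ ENNReal.ofReal ε) :
    ∫⁻ ω, f (P ω) ∂Q ≤ 1 := by
  set F : ℝ → ℝ≥0∞ := fun x => f (projIcc 0 1 zero_le_one x)
  have hF : Antitone F := hf.antitone_comp_projIcc zero_le_one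
  have hFf : ∀ x ∈ Icc (0:ℝ) 1, F x = f x := fun x hx => by simp [F, projIcc_of_mem _ hx]
  have hlaw : ∀ x, Q.map P (Iic x) ≤ ENNReal.ofReal x := fun x => by
    rw [Measure.map_apply hPmeas measurableSet_Iic]
    exact measure_setOf_le_le_ofReal hP x
  calc ∫⁻ ω, f (P ω) ∂Q = ∫⁻ x, F x ∂(Q.map P) := by
        rw [lintegral_map hF.measurable hPmeas]
        exact lintegral_congr fun ω => (hFf _ (hP01 ω)).symm
    _ ≤ ∫⁻ x in Icc 0 1, F x := lintegral_le_setLIntegral_Icc_of_antitone hlaw hF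
    _ = ∫⁻ x in Icc 0 1, f x := setLIntegral_congr_fun measurableSet_Icc hFf
    _ ≤ 1 := hint
end

section
/- For each κ ∈ (0,1), the function f_κ(p) := κ p^(κ−1) is a calibrator: for any p-variable P, E[κ P^(κ−1)] ≤ 1. -/
open MeasureTheory Set

/-! By the layer-cake formula, `E[κ P^(κ-1)] = ∫₀^∞ Q(t < κ P^(κ-1)) dt`. For `t ≤ κ` the integrand
is at most `1`. For `t > κ`, since `p ↦ κ p^(κ-1)` is decreasing, the event forces
`P ≤ (t/κ)^(1/(κ-1)) < 1`, which has probability at most `(t/κ)^(1/(κ-1))` by the p-variable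
property, and `∫_κ^∞ (t/κ)^(1/(κ-1)) dt = 1 - κ`. The same property gives `P > 0` almost surely,
so the convention `0^(κ-1) = ∞` is harmless. -/

section

variable {Ω : Type*} [MeasurableSpace Ω] {Q : Measure Ω} {P : Ω → ℝ}

lemma ae_pos_of_forall_measure_le_le_ofReal
    (hP : ∀ ε ∈ Ioo (0:ℝ) 1, Q {ω | P ω ≤ ε} ≤ ENNReal.ofReal ε) : ∀ᵐ ω ∂Q, 0 < P ω := by
  have hzero : Q {ω | P ω ≤ 0} ≤ 0 := by
    refine ge_of_tendsto (ENNReal.ofReal_zero ▸ (ENNReal.continuous_ofReal.tendsto 0).mono_left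
      (nhdsWithin_le_nhds (s := Ioi 0))) ?_
    filter_upwards [Ioo_mem_nhdsGT zero_lt_one] with ε hε
    exact (measure_mono fun ω (h : P ω ≤ 0) => h.trans hε.1.le).trans (hP ε hε)
  simpa [ae_iff] using hzero

lemma measure_lt_comp_le_of_antitoneOn
    (hP : ∀ ε ∈ Ioo (0:ℝ) 1, Q {ω | P ω ≤ ε} ≤ ENNReal.ofReal ε)
    {g : ℝ → ℝ} (hg : AntitoneOn g (Ioi 0)) {s t : ℝ} (hs : s ∈ Ioo 0 1) (hst : g s ≤ t) :
    Q {ω | t < g (P ω)} ≤ ENNReal.ofReal s := by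
  refine (measure_mono fun ω (hω : t < g (P ω)) => show P ω ≤ s from ?_).trans (hP s hs)
  by_contra! hsP
  exact (hg hs.1 (hs.1.trans hsP) hsP.le |>.trans hst).not_gt hω

lemma measure_lt_mul_rpow_le
    (hP : ∀ ε ∈ Ioo (0:ℝ) 1, Q {ω | P ω ≤ ε} ≤ ENNReal.ofReal ε)
    {κ : ℝ} (hκ : κ ∈ Ioo (0:ℝ) 1) {t : ℝ} (ht : κ < t) :
    Q {ω | t < κ * P ω ^ (κ - 1)} ≤ ENNReal.ofReal ((t / κ) ^ (κ - 1)⁻¹) := by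
  obtain ⟨hκ0, hκ1⟩ := hκ
  have htκ : 1 < t / κ := (one_lt_div hκ0).2 ht
  have hanti : AntitoneOn (fun p : ℝ => κ * p ^ (κ - 1)) (Ioi 0) := fun p hp q hq hpq =>
    mul_le_mul_of_nonneg_left
      (Real.antitoneOn_rpow_Ioi_of_exponent_nonpos (by linarith) hp hq hpq) hκ0.le
  refine measure_lt_comp_le_of_antitoneOn hP hanti
    ⟨Real.rpow_pos_of_pos (by linarith) _,
      Real.rpow_lt_one_of_one_lt_of_neg htκ (inv_lt_zero.2 (by linarith))⟩ ?_
  rw [Real.rpow_inv_rpow (by linarith) (by linarith), mul_div_cancel₀ _ hκ0.ne']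

end

lemma lintegral_Ioi_ofReal_div_rpow {c b : ℝ} (hc : 0 < c) (hb : b < -1) :
    ∫⁻ t in Ioi c, ENNReal.ofReal ((t / c) ^ b) = ENNReal.ofReal (-c / (b + 1)) := by
  have hdiv : ∀ t ∈ Ioi c, (t / c) ^ b = t ^ b / c ^ b := fun t ht =>
    Real.div_rpow (hc.trans ht).le hc.le _
  rw [setLIntegral_congr_fun measurableSet_Ioi fun t ht => by rw [hdiv t ht],
    ← ofReal_integral_eq_lintegral_ofReal ((integrableOn_Ioi_rpow_of_lt hb hc).div_const _)]
  · rw [integral_div, integral_Ioi_rpow_of_lt hb hc, Real.rpow_add_one hc.ne']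
    field_simp
  · filter_upwards [ae_restrict_mem measurableSet_Ioi] with t (ht : c < t)
    have := hc.trans ht
    positivity

lemma lintegral_Ioi_ofReal_div_rpow_inv_sub_one {κ : ℝ} (hκ : κ ∈ Ioo (0:ℝ) 1) :
    ∫⁻ t in Ioi κ, ENNReal.ofReal ((t / κ) ^ (κ - 1)⁻¹) = ENNReal.ofReal (1 - κ) := by
  obtain ⟨hκ0, hκ1⟩ := hκ
  have hexp : (κ - 1)⁻¹ < -1 := by
    rw [inv_lt_of_neg (by linarith) (by norm_num)]; norm_num; linarith
  have hκ1' : κ - 1 ≠ 0 := by linarith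
  rw [lintegral_Ioi_ofReal_div_rpow hκ0 hexp]
  congr 1
  field_simp [hκ0.ne']
  ring

theorem kappa_power_is_calibrator_general
    {Ω : Type*} [MeasurableSpace Ω] (Q : Measure Ω) [IsProbabilityMeasure Q]
    (κ : ℝ) (hκ : κ ∈ Set.Ioo (0:ℝ) 1)
    (P : Ω → ℝ) (hPmeas : Measurable P)
    (hP : ∀ ε ∈ Set.Ioo (0:ℝ) 1, Q {ω | P ω ≤ ε} ≤ ENNReal.ofReal ε) :
    ∫⁻ ω, ENNReal.ofReal κ * (ENNReal.ofReal (P ω)) ^ (κ - 1) ∂Q ≤ 1 := by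
  have hpos := ae_pos_of_forall_measure_le_le_ofReal hP
  have hreal : ∀ᵐ ω ∂Q, ENNReal.ofReal κ * ENNReal.ofReal (P ω) ^ (κ - 1) =
      ENNReal.ofReal (κ * P ω ^ (κ - 1)) := by
    filter_upwards [hpos] with ω hω
    rw [ENNReal.ofReal_mul hκ.1.le, ENNReal.ofReal_rpow_of_pos hω]
  have hnonneg : 0 ≤ᵐ[Q] fun ω => κ * P ω ^ (κ - 1) := by
    filter_upwards [hpos] with ω hω
    exact mul_nonneg hκ.1.le (Real.rpow_nonneg hω.le _)
  rw [lintegral_congr_ae hreal, lintegral_eq_lintegral_meas_lt Q hnonneg (by fun_prop),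
    ← Ioc_union_Ioi_eq_Ioi hκ.1.le, lintegral_union measurableSet_Ioi (Ioc_disjoint_Ioi le_rfl)]
  calc _ ≤ (∫⁻ _ in Ioc 0 κ, 1) + ∫⁻ t in Ioi κ, ENNReal.ofReal ((t / κ) ^ (κ - 1)⁻¹) :=
        add_le_add (setLIntegral_mono measurable_const fun _ _ => prob_le_one)
          (setLIntegral_mono (by fun_prop) fun _ ht => measure_lt_mul_rpow_le hP hκ ht)
    _ = ENNReal.ofReal κ + ENNReal.ofReal (1 - κ) := by
        rw [setLIntegral_one, Real.volume_Ioc, sub_zero,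
          lintegral_Ioi_ofReal_div_rpow_inv_sub_one hκ]
    _ = 1 := by rw [← ENNReal.ofReal_add hκ.1.le (by linarith [hκ.2])]; simp

/-- For each `κ ∈ (0,1)`, `f_κ(p) := κ p^(κ−1)` is a calibrator:
for any p-variable `P`, `E[κ P^(κ−1)] ≤ 1`. (Computed in `[0,∞]`, so `0^(κ-1) = ∞`.) -/
theorem kappa_power_is_calibrator
    {Ω : Type*} [MeasurableSpace Ω] (Q : Measure Ω) [IsProbabilityMeasure Q]
    (κ : ℝ) (hκ : κ ∈ Set.Ioo (0:ℝ) 1)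
    (P : Ω → ℝ) (hPmeas : Measurable P) (hP01 : ∀ ω, P ω ∈ Set.Icc (0:ℝ) 1)
    (hP : ∀ ε ∈ Set.Ioo (0:ℝ) 1, Q {ω | P ω ≤ ε} ≤ ENNReal.ofReal ε) :
    ∫⁻ ω, ENNReal.ofReal κ * (ENNReal.ofReal (P ω)) ^ (κ - 1) ∂Q ≤ 1 :=
  kappa_power_is_calibrator_general Q κ hκ P hPmeas hP
end

section
/- The function F(p) := (1 − p + p·ln p)/(p·(ln p)²) for p ∈ (0,1), with F(0) := ∞ and F(1) := 1/2, satisfies F(p) = ∫₀¹ κ p^(κ−1) dκ for p ∈ (0,1), and is a calibrator: E[F(P)] ≤ 1 for every p-variable P. -/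
/-!
`F` is the mixture `∫₀¹ κ p ^ (κ - 1) dκ` of the power calibrators `p ↦ κ p ^ (κ - 1)`, which
integrates in closed form to the stated expression. Each power calibrator is valid: by the layer
cake formula and `Q(P ^ (κ - 1) > t) ≤ Q(P ≤ t ^ (1 / (κ - 1))) ≤ t ^ (1 / (κ - 1))` for `t > 1`,
`E[P ^ (κ - 1)] ≤ 1 + (1 - κ) / κ = 1 / κ`. A p-variable is almost surely positive, so `F(P)`
is almost surely the mixture evaluated at `P`, and Tonelli bounds `E[F(P)]` by `∫₀¹ 1 dκ = 1`.
-/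

open MeasureTheory Set Filter Topology
open scoped ENNReal

lemma lintegral_Ioo_ofReal_eq_intervalIntegral {f : ℝ → ℝ} {a b : ℝ} (hab : a ≤ b)
    (hf : ContinuousOn f (Icc a b)) (hf_nonneg : ∀ x ∈ Ioo a b, 0 ≤ f x) :
    ∫⁻ x in Ioo a b, ENNReal.ofReal (f x) = ENNReal.ofReal (∫ x in a..b, f x) := by
  rw [intervalIntegral.integral_of_le hab, integral_Ioc_eq_integral_Ioo,
    ofReal_integral_eq_lintegral_ofReal ((hf.integrableOn_Icc).mono_set Ioo_subset_Icc_self)]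
  filter_upwards [ae_restrict_mem measurableSet_Ioo] with x hx using hf_nonneg x hx

lemma integral_mul_rpow_sub_one {p : ℝ} (hp0 : 0 < p) (hp1 : p ≠ 1) :
    ∫ κ in (0:ℝ)..1, κ * p ^ (κ - 1) = (1 - p + p * Real.log p) / (p * Real.log p ^ 2) := by
  have hlog : Real.log p ≠ 0 := Real.log_ne_zero_of_pos_of_ne_one hp0 hp1
  have hderiv : ∀ κ ∈ uIcc (0:ℝ) 1, HasDerivAt
      (fun κ => p ^ (κ - 1) * (κ / Real.log p - 1 / Real.log p ^ 2)) (κ * p ^ (κ - 1)) κ := by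
    intro κ _
    refine ((((hasDerivAt_id κ).sub_const 1).const_rpow hp0).mul
      (((hasDerivAt_id κ).div_const (Real.log p)).sub_const (1 / Real.log p ^ 2))).congr_deriv ?_
    simp only [id]
    field_simp
    ring
  rw [intervalIntegral.integral_eq_sub_of_hasDerivAt hderiv
    (by apply Continuous.intervalIntegrable; fun_prop (disch := exact hp0.ne'))]
  simp only [sub_self, Real.rpow_zero, zero_sub, Real.rpow_neg_one]
  field_simp
  ring

lemma lintegral_Ioo_mul_rpow_sub_one {p : ℝ} (hp0 : 0 < p) (hp1 : p ≠ 1) :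
    ∫⁻ κ in Ioo (0:ℝ) 1, ENNReal.ofReal (κ * p ^ (κ - 1))
      = ENNReal.ofReal ((1 - p + p * Real.log p) / (p * Real.log p ^ 2)) := by
  rw [lintegral_Ioo_ofReal_eq_intervalIntegral zero_le_one, integral_mul_rpow_sub_one hp0 hp1]
  · exact Continuous.continuousOn (by fun_prop (disch := exact hp0.ne'))
  · exact fun κ hκ => mul_nonneg hκ.1.le (Real.rpow_nonneg hp0.le _)

lemma lintegral_Ioo_mul_one_rpow_sub_one :
    ∫⁻ κ in Ioo (0:ℝ) 1, ENNReal.ofReal (κ * (1:ℝ) ^ (κ - 1)) = ENNReal.ofReal (1 / 2) := by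
  simp only [Real.one_rpow, mul_one]
  rw [lintegral_Ioo_ofReal_eq_intervalIntegral zero_le_one (continuousOn_id' _)
    fun κ hκ => hκ.1.le, integral_id]
  norm_num

lemma lintegral_Ioi_one_rpow {a : ℝ} (ha : a < -1) :
    ∫⁻ t in Ioi (1:ℝ), ENNReal.ofReal (t ^ a) = ENNReal.ofReal (-1 / (a + 1)) := by
  rw [← ofReal_integral_eq_lintegral_ofReal (integrableOn_Ioi_rpow_of_lt ha one_pos),
    integral_Ioi_rpow_of_lt ha one_pos, Real.one_rpow]
  filter_upwards [ae_restrict_mem measurableSet_Ioi] with t ht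
  exact Real.rpow_nonneg (zero_le_one.trans (le_of_lt ht)) a

section PVariable

variable {Ω : Type*} [MeasurableSpace Ω] {Q : Measure Ω} {P : Ω → ℝ}

def IsPVariable (Q : Measure Ω) (P : Ω → ℝ) : Prop :=
  ∀ ε ∈ Ioo (0:ℝ) 1, Q {ω | P ω ≤ ε} ≤ ENNReal.ofReal ε

lemma ae_pos_of_pvariable (hpv : IsPVariable Q P) : ∀ᵐ ω ∂Q, 0 < P ω := by
  have hlim : Tendsto ENNReal.ofReal (𝓝[>] 0) (𝓝 0) := by
    simpa using (ENNReal.continuous_ofReal.tendsto 0).mono_left nhdsWithin_le_nhds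
  have hnull : Q {ω | P ω ≤ 0} ≤ 0 := by
    refine ge_of_tendsto hlim ?_
    filter_upwards [Ioo_mem_nhdsGT zero_lt_one] with ε hε
    exact (measure_mono fun ω (h : P ω ≤ 0) => h.trans hε.1.le).trans (hpv ε hε)
  simpa [ae_iff] using hnull

lemma measure_lt_rpow_sub_one_le (hpv : IsPVariable Q P) (hP : ∀ ω, 0 ≤ P ω) {κ t : ℝ} (hκ : κ < 1) (ht : 1 < t) :
    Q {ω | t < P ω ^ (κ - 1)} ≤ ENNReal.ofReal (t ^ (κ - 1)⁻¹) := by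
  have hexp : (κ - 1)⁻¹ < 0 := inv_lt_zero.2 (by linarith)
  have hlevel : t ^ (κ - 1)⁻¹ ∈ Ioo (0:ℝ) 1 :=
    ⟨Real.rpow_pos_of_pos (by linarith) _, Real.rpow_lt_one_of_one_lt_of_neg ht hexp⟩
  refine (measure_mono fun ω (hω : t < P ω ^ (κ - 1)) => ?_).trans (hpv _ hlevel)
  rcases (hP ω).eq_or_lt with h0 | h0
  · rw [← h0, Real.zero_rpow (by linarith)] at hω
    linarith
  · exact (Real.le_rpow_inv_iff_of_neg h0 (by linarith) (by linarith)).2 hω.le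

lemma lintegral_rpow_sub_one_le [IsProbabilityMeasure Q] (hpv : IsPVariable Q P)
    (hP_meas : Measurable P) (hP : ∀ ω, 0 ≤ P ω) {κ : ℝ} (hκ : κ ∈ Ioo (0:ℝ) 1) :
    ∫⁻ ω, ENNReal.ofReal (P ω ^ (κ - 1)) ∂Q ≤ ENNReal.ofReal (1 / κ) := by
  obtain ⟨hκ0, hκ1⟩ := hκ
  have hexp : (κ - 1)⁻¹ < -1 := by
    rw [inv_lt_of_neg (by linarith) (by norm_num)]
    linarith
  have hbody : ∫⁻ t in Ioc (0:ℝ) 1, Q {ω | t < P ω ^ (κ - 1)} ≤ 1 :=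
    calc _ ≤ ∫⁻ _ in Ioc (0:ℝ) 1, 1 := lintegral_mono fun _ => prob_le_one
      _ = 1 := by simp
  have htail : ∫⁻ t in Ioi (1:ℝ), Q {ω | t < P ω ^ (κ - 1)} ≤ ENNReal.ofReal ((1 - κ) / κ) :=
    calc _ ≤ ∫⁻ t in Ioi (1:ℝ), ENNReal.ofReal (t ^ (κ - 1)⁻¹) :=
          setLIntegral_mono' measurableSet_Ioi fun t ht =>
            measure_lt_rpow_sub_one_le hpv hP hκ1 ht
      _ = ENNReal.ofReal ((1 - κ) / κ) := by
          rw [lintegral_Ioi_one_rpow hexp]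
          congr 1
          field_simp [show κ - 1 ≠ 0 by linarith, hκ0.ne']
          ring
  rw [lintegral_eq_lintegral_meas_lt Q (ae_of_all _ fun ω => Real.rpow_nonneg (hP ω) _)
      (by fun_prop), ← Ioc_union_Ioi_eq_Ioi zero_le_one,
    lintegral_union measurableSet_Ioi (Ioc_disjoint_Ioi le_rfl)]
  calc _ ≤ 1 + ENNReal.ofReal ((1 - κ) / κ) := add_le_add hbody htail
    _ = ENNReal.ofReal (1 / κ) := by
        rw [← ENNReal.ofReal_one, ← ENNReal.ofReal_add zero_le_one (by bound)]
        congr 1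
        field_simp
        ring

lemma lintegral_mul_rpow_sub_one_le_one [IsProbabilityMeasure Q] (hpv : IsPVariable Q P)
    (hP_meas : Measurable P) (hP : ∀ ω, 0 ≤ P ω) {κ : ℝ} (hκ : κ ∈ Ioo (0:ℝ) 1) :
    ∫⁻ ω, ENNReal.ofReal (κ * P ω ^ (κ - 1)) ∂Q ≤ 1 := by
  simp_rw [ENNReal.ofReal_mul hκ.1.le]
  rw [lintegral_const_mul _ (by fun_prop)]
  calc _ ≤ ENNReal.ofReal κ * ENNReal.ofReal (1 / κ) :=
        mul_le_mul_right (lintegral_rpow_sub_one_le hpv hP_meas hP hκ) _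
    _ = 1 := by rw [← ENNReal.ofReal_mul hκ.1.le, mul_one_div_cancel hκ.1.ne', ENNReal.ofReal_one]

lemma lintegral_lintegral_Ioo_mul_rpow_sub_one_le [IsProbabilityMeasure Q] (hpv : IsPVariable Q P)
    (hP_meas : Measurable P) (hP : ∀ ω, 0 ≤ P ω) :
    ∫⁻ ω, (∫⁻ κ in Ioo (0:ℝ) 1, ENNReal.ofReal (κ * P ω ^ (κ - 1))) ∂Q ≤ 1 := by
  rw [lintegral_lintegral_swap (by fun_prop)]
  calc _ ≤ ∫⁻ _ in Ioo (0:ℝ) 1, 1 := setLIntegral_mono' measurableSet_Ioo fun _ hκ =>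
        lintegral_mul_rpow_sub_one_le_one hpv hP_meas hP hκ
    _ = 1 := by simp

end PVariable

theorem mixture_calibrator_general
    (F : ℝ → ℝ≥0∞)
    (hF1 : F 1 = ENNReal.ofReal (1/2))
    (hFmid : ∀ p ∈ Set.Ioo (0:ℝ) 1,
      F p = ENNReal.ofReal ((1 - p + p * Real.log p) / (p * (Real.log p) ^ 2))) :
    (∀ p ∈ Set.Ioo (0:ℝ) 1,
      F p = ∫⁻ κ in Set.Ioo (0:ℝ) 1, ENNReal.ofReal (κ * p ^ (κ - 1))) ∧
    (∀ (Ω : Type) [MeasurableSpace Ω] (Q : Measure Ω), IsProbabilityMeasure Q →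
      ∀ P : Ω → ℝ, Measurable P → (∀ ω, P ω ∈ Set.Icc (0:ℝ) 1) →
        (∀ ε ∈ Set.Ioo (0:ℝ) 1, Q {ω | P ω ≤ ε} ≤ ENNReal.ofReal ε) →
        ∫⁻ ω, F (P ω) ∂Q ≤ 1) := by
  refine ⟨fun p hp => by rw [hFmid p hp, lintegral_Ioo_mul_rpow_sub_one hp.1 hp.2.ne], ?_⟩
  intro Ω _ Q _ P hP_meas hP hpv
  have hF_mixture : ∀ᵐ ω ∂Q,
      F (P ω) = ∫⁻ κ in Ioo (0:ℝ) 1, ENNReal.ofReal (κ * P ω ^ (κ - 1)) := by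
    filter_upwards [ae_pos_of_pvariable hpv] with ω hω
    rcases (hP ω).2.lt_or_eq with h1 | h1
    · rw [hFmid _ ⟨hω, h1⟩, lintegral_Ioo_mul_rpow_sub_one hω h1.ne]
    · rw [h1, hF1, lintegral_Ioo_mul_one_rpow_sub_one]
  rw [lintegral_congr_ae hF_mixture]
  exact lintegral_lintegral_Ioo_mul_rpow_sub_one_le hpv hP_meas fun ω => (hP ω).1

/-- The function `F(p) = (1 − p + p ln p)/(p (ln p)²)` on `(0,1)`, with
`F(0) = ∞` and `F(1) = 1/2`, equals `∫₀¹ κ p^(κ−1) dκ` on `(0,1)` and is a calibrator. -/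
theorem mixture_calibrator
    (F : ℝ → ℝ≥0∞)
    (hF0 : F 0 = ∞) (hF1 : F 1 = ENNReal.ofReal (1/2))
    (hFmid : ∀ p ∈ Set.Ioo (0:ℝ) 1,
      F p = ENNReal.ofReal ((1 - p + p * Real.log p) / (p * (Real.log p) ^ 2))) :
    (∀ p ∈ Set.Ioo (0:ℝ) 1,
      F p = ∫⁻ κ in Set.Ioo (0:ℝ) 1, ENNReal.ofReal (κ * p ^ (κ - 1))) ∧
    (∀ (Ω : Type) [MeasurableSpace Ω] (Q : Measure Ω), IsProbabilityMeasure Q →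
      ∀ P : Ω → ℝ, Measurable P → (∀ ω, P ω ∈ Set.Icc (0:ℝ) 1) →
        (∀ ε ∈ Set.Ioo (0:ℝ) 1, Q {ω | P ω ≤ ε} ≤ ENNReal.ofReal ε) →
        ∫⁻ ω, F (P ω) ∂Q ≤ 1) :=
  mixture_calibrator_general F hF1 hFmid
end

section
/- Every e-to-p calibrator g is dominated by f(t) := min(1, 1/t); that is, g(t) ≥ min(1, 1/t) for all t ∈ [0,∞]. -/
open MeasureTheory
open scoped ENNReal NNReal

/-- Every e-to-p calibrator `g` is dominated by `f(t) = min(1,1/t)`: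
`g(t) ≥ min(1, 1/t)` for all `t ∈ [0,∞]`. -/
theorem e_to_p_calibrator_dominated
    (g : ℝ≥0∞ → ℝ) (hganti : Antitone g) (hg01 : ∀ t, g t ∈ Set.Icc (0:ℝ) 1)
    (hgmeas : Measurable g)
    (hcal : ∀ (Ω : Type) [MeasurableSpace Ω] (Q : Measure Ω),
      IsProbabilityMeasure Q →
      ∀ E : Ω → ℝ≥0∞, Measurable E → (∫⁻ ω, E ω ∂Q ≤ 1) →
        ∀ ε ∈ Set.Ioo (0:ℝ) 1, Q {ω | g (E ω) ≤ ε} ≤ ENNReal.ofReal ε) :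
    ∀ t : ℝ≥0∞, (min 1 t⁻¹).toReal ≤ g t := by
  intro t
  by_contra hlt
  push_neg at hlt
  set w : ℝ≥0∞ := min 1 t⁻¹ with hw
  have hw1 : w ≤ 1 := min_le_left _ _
  have hwne : w ≠ ∞ := ne_top_of_le_ne_top ENNReal.one_ne_top hw1
  have hwR1 : w.toReal ≤ 1 := by
    have := ENNReal.toReal_mono ENNReal.one_ne_top hw1
    simpa using this
  have hg0 : 0 ≤ g t := (hg01 t).1
  have hwRpos : 0 < w.toReal := lt_of_le_of_lt hg0 hlt
  -- the probability measure on Bool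
  let Q : Measure Bool := w • Measure.dirac true + (1 - w) • Measure.dirac false
  have hQtop : Q Set.univ = 1 := by
    simp only [Q, Measure.add_apply, Measure.smul_apply, smul_eq_mul,
      measure_univ, mul_one]
    exact add_tsub_cancel_of_le hw1
  have hQprob : IsProbabilityMeasure Q := ⟨hQtop⟩
  let E : Bool → ℝ≥0∞ := fun b => if b then t else 0
  have hEmeas : Measurable E := measurable_of_countable E
  have hint : ∫⁻ ω, E ω ∂Q ≤ 1 := by
    have : ∫⁻ ω, E ω ∂Q = w * t := by
      simp [Q, E, lintegral_add_measure, lintegral_smul_measure, lintegral_dirac]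
    rw [this]
    calc w * t ≤ t⁻¹ * t := mul_le_mul_left (min_le_right _ _) t
      _ ≤ 1 := ENNReal.inv_mul_le_one t
  set ε : ℝ := (g t + w.toReal) / 2 with hε
  have hεmem : ε ∈ Set.Ioo (0:ℝ) 1 := by
    constructor
    · positivity
    · have : ε < w.toReal := by linarith
      linarith
  have hgε : g t ≤ ε := by simp only [hε]; linarith
  have hεw : ε < w.toReal := by simp only [hε]; linarith
  have hkey := hcal Bool Q hQprob E hEmeas hint ε hεmem
  have hmem : True = true → g (E true) ≤ ε := fun _ => by simpa [E] using hgε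
  have hsub : ({true} : Set Bool) ⊆ {ω | g (E ω) ≤ ε} := by
    intro b hb
    simp only [Set.mem_singleton_iff] at hb
    subst hb
    simpa [E, Set.mem_setOf_eq] using hgε
  have hQge : w ≤ Q {ω | g (E ω) ≤ ε} := by
    calc w = Q {true} := by
            simp [Q, Measure.dirac_apply, Set.indicator]
      _ ≤ Q {ω | g (E ω) ≤ ε} := measure_mono hsub
  have : w ≤ ENNReal.ofReal ε := le_trans hQge hkey
  have hcontra : w.toReal ≤ ε := by
    have := ENNReal.toReal_mono (by simp) this
    simpa [ENNReal.toReal_ofReal (le_of_lt hεmem.1)] using this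
  linarith
end

section
/- The arithmetic mean essentially dominates every symmetric e-merging function: if F is a symmetric e-merging function and e = (e₁,…,e_K) ∈ [0,∞)^K satisfies F(e) > 1, then F(e) ≤ (e₁+⋯+e_K)/K. Equivalently, there is no point e with F(e) > max((e₁+⋯+e_K)/K, 1). -/
open MeasureTheory
open scoped ENNReal NNReal BigOperators

/-- An e-merging function: an increasing Borel function `F : [0,∞)^K → [0,∞)` such that
`E[F(E₁,…,E_K)] ≤ 1` whenever `E₁,…,E_K` are (arbitrarily dependent) nonnegative random
variables with expectation at most 1, on any probability space. -/
def IsEMerging (K : ℕ) (F : (Fin K → ℝ) → ℝ) : Prop :=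
  Monotone F ∧ Measurable F ∧ (∀ e, 0 ≤ F e) ∧
  ∀ (Ω : Type) [MeasurableSpace Ω] (Q : Measure Ω), IsProbabilityMeasure Q →
    ∀ E : Fin K → Ω → ℝ, (∀ k, Measurable (E k)) → (∀ k ω, 0 ≤ E k ω) →
      (∀ k, ∫⁻ ω, ENNReal.ofReal (E k ω) ∂Q ≤ 1) →
      ∫⁻ ω, ENNReal.ofReal (F (fun k => E k ω)) ∂Q ≤ 1

/-! Mix the point mass at `0` with the uniform distribution on the `K` cyclic shifts of `e`,
giving the shifts total weight `p = 1 / max(ē, 1)`, where `ē` is the arithmetic mean of `e`.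
Every coordinate of this random vector has mean `p ē ≤ 1`, and by symmetry `F` equals `F(e)` on
each shift, so the e-merging property gives `p F(e) ≤ 1`, that is `F(e) ≤ max(ē, 1)`. -/

section FiniteMixture

variable {Ω : Type*} [MeasurableSpace Ω] [MeasurableSingletonClass Ω] [Fintype Ω]

theorem lintegral_ofReal_sum_smul_dirac {v g : Ω → ℝ} (hv : ∀ x, 0 ≤ v x) (hg : ∀ x, 0 ≤ g x) :
    ∫⁻ x, ENNReal.ofReal (g x) ∂(∑ x, ENNReal.ofReal (v x) • Measure.dirac x)
      = ENNReal.ofReal (∑ x, v x * g x) := by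
  rw [lintegral_finsetSum_measure,
    ENNReal.ofReal_sum_of_nonneg fun x _ => mul_nonneg (hv x) (hg x)]
  refine Finset.sum_congr rfl fun x _ => ?_
  rw [lintegral_smul_measure, lintegral_dirac, smul_eq_mul, ENNReal.ofReal_mul (hv x)]

theorem isProbabilityMeasure_sum_smul_dirac {v : Ω → ℝ} (hv : ∀ x, 0 ≤ v x)
    (hv1 : ∑ x, v x = 1) :
    IsProbabilityMeasure (∑ x, ENNReal.ofReal (v x) • Measure.dirac x) := by
  constructor
  have h := lintegral_ofReal_sum_smul_dirac hv fun _ => zero_le_one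
  simpa [hv1] using h

end FiniteMixture

namespace IsEMerging

variable {K : ℕ} {F : (Fin K → ℝ) → ℝ}

/-- Completed by an atom at `0`, the weights `w` become a probability distribution on the points
`x j` and `0`, whose term at `0` contributes `F 0 ≥ 0`. -/
theorem sum_mul_le_one (hF : IsEMerging K F) {J : Type} [Fintype J] {w : J → ℝ}
    (hw : ∀ j, 0 ≤ w j) (hw1 : ∑ j, w j ≤ 1) {x : J → Fin K → ℝ} (hx : ∀ j k, 0 ≤ x j k)
    (hmean : ∀ k, ∑ j, w j * x j k ≤ 1) :
    ∑ j, w j * F (x j) ≤ 1 := by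
  obtain ⟨-, -, hF0, hvalid⟩ := hF
  let : MeasurableSpace (Option J) := ⊤
  set v : Option J → ℝ := fun o => o.elim (1 - ∑ j, w j) w
  set E : Fin K → Option J → ℝ := fun k o => o.elim 0 fun j => x j k
  have hv : ∀ o, 0 ≤ v o := by
    rintro (_ | j)
    · exact sub_nonneg.mpr hw1
    · exact hw j
  have hE : ∀ k o, 0 ≤ E k o := by
    rintro k (_ | j)
    · exact le_rfl
    · exact hx j k
  have hQ : IsProbabilityMeasure (∑ o, ENNReal.ofReal (v o) • Measure.dirac o) :=
    isProbabilityMeasure_sum_smul_dirac hv (by simp [v, Fintype.sum_option])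
  have hEmean : ∀ k, ∫⁻ o, ENNReal.ofReal (E k o)
      ∂(∑ o, ENNReal.ofReal (v o) • Measure.dirac o) ≤ 1 := fun k => by
    rw [lintegral_ofReal_sum_smul_dirac hv (hE k), ENNReal.ofReal_le_one]
    simpa [v, E, Fintype.sum_option] using hmean k
  have hmerged := hvalid _ _ hQ E (fun _ => .of_discrete) hE hEmean
  rw [lintegral_ofReal_sum_smul_dirac hv fun o => hF0 _, ENNReal.ofReal_le_one,
    Fintype.sum_option] at hmerged
  have hatom : 0 ≤ v none * F (fun k => E k none) := mul_nonneg (hv none) (hF0 _)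
  exact le_trans (le_add_of_nonneg_left hatom) hmerged

theorem le_max_mean_one [NeZero K] (hF : IsEMerging K F)
    (hshift : ∀ (e : Fin K → ℝ) (j : Fin K), F (fun k => e (k + j)) = F e)
    {e : Fin K → ℝ} (he : ∀ k, 0 ≤ e k) :
    F e ≤ max ((∑ k, e k) / K) 1 := by
  set m := max ((∑ k, e k) / K) 1
  have hm : 0 < m := lt_max_of_lt_right one_pos
  have hK : (0 : ℝ) < K := Nat.cast_pos.mpr (Nat.pos_of_neZero K)
  have hw1 : ∑ _j : Fin K, 1 / (K * m) = 1 / m := by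
    rw [Finset.sum_const, Finset.card_univ, Fintype.card_fin, nsmul_eq_mul]
    field_simp
  have hcyc : ∀ k, ∑ j, e (k + j) = ∑ i, e i := fun k => Equiv.sum_comp (Equiv.addLeft k) e
  have h := sum_mul_le_one hF (w := fun _ => 1 / (K * m)) (x := fun j k => e (k + j))
    (fun _ => by positivity) (by rw [hw1, div_le_one hm]; exact le_max_right _ _)
    (fun _ _ => he _) (fun k => by
      rw [← Finset.mul_sum, hcyc, one_div_mul_eq_div, div_le_one (by positivity), mul_comm,
        ← div_le_iff₀ hK]
      exact le_max_left _ _)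
  simp only [hshift] at h
  rwa [← Finset.sum_mul, hw1, one_div_mul_eq_div, div_le_one hm] at h

end IsEMerging

/-- The arithmetic mean essentially dominates every symmetric e-merging
function: if `F` is a symmetric e-merging function and `F(e) > 1` at a nonnegative
point `e`, then `F(e) ≤ (e₁+⋯+e_K)/K`. -/
theorem arithmetic_mean_essentially_dominates
    (K : ℕ) (hK : 2 ≤ K) (F : (Fin K → ℝ) → ℝ) (hF : IsEMerging K F)
    (hsymm : ∀ (e : Fin K → ℝ) (σ : Equiv.Perm (Fin K)), F (e ∘ σ) = F e) :
    ∀ e : Fin K → ℝ, (∀ k, 0 ≤ e k) → 1 < F e → F e ≤ (∑ k, e k) / K := by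
  intro e he hFe
  have : NeZero K := ⟨by omega⟩
  have hshift (e : Fin K → ℝ) (j : Fin K) : F (fun k => e (k + j)) = F e :=
    hsymm e (Equiv.addRight j)
  exact (le_max_iff.mp (hF.le_max_mean_one hshift he)).resolve_right hFe.not_ge
end

section
/- The product weakly dominates every ie-merging function: if F is an ie-merging function and (e₁,…,e_K) ∈ [1,∞)^K, then F(e₁,…,e_K) ≤ e₁⋯e_K. -/
/-!
Let `E_k` be independent, equal to `e_k` with probability `1 / e_k` and to `0` otherwise, so that
`E[E_k] = 1`. With probability `∏ 1 / e_k` every `E_k` takes its top value, where `F(E) = F(e)`;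
as `F ≥ 0` this gives `F(e) / ∏ e_k ≤ E[F(E)] ≤ 1`.
-/

open MeasureTheory ProbabilityTheory
open scoped ENNReal NNReal BigOperators

/-- An ie-merging function: an increasing Borel function `F : [0,∞)^K → [0,∞)` such that
`E[F(E₁,…,E_K)] ≤ 1` for all independent nonnegative random variables `E₁,…,E_K`
each with expectation at most 1, on any probability space. -/
def IsIEMerging (K : ℕ) (F : (Fin K → ℝ) → ℝ) : Prop :=
  Monotone F ∧ Measurable F ∧ (∀ e, 0 ≤ F e) ∧
  ∀ (Ω : Type) [MeasurableSpace Ω] (Q : Measure Ω), IsProbabilityMeasure Q →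
    ∀ E : Fin K → Ω → ℝ, (∀ k, Measurable (E k)) → (∀ k ω, 0 ≤ E k ω) →
      iIndepFun E Q →
      (∀ k, ∫⁻ ω, ENNReal.ofReal (E k ω) ∂Q ≤ 1) →
      ∫⁻ ω, ENNReal.ofReal (F (fun k => E k ω)) ∂Q ≤ 1

open unitInterval

lemma ProbabilityTheory.lintegral_bernoulliMeasure {X : Type*} [MeasurableSpace X]
    [MeasurableSingletonClass X] (x y : X) (p : I) (f : X → ℝ≥0∞) :
    ∫⁻ z, f z ∂Ber(x, y, p) = toNNReal p * f x + toNNReal (σ p) * f y := by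
  rw [bernoulliMeasure_def, lintegral_add_measure, lintegral_smul_measure, lintegral_smul_measure,
    lintegral_dirac, lintegral_dirac]
  rfl

lemma MeasureTheory.mul_measure_singleton_le_lintegral {α : Type*} [MeasurableSpace α]
    [MeasurableSingletonClass α] (μ : Measure α) (f : α → ℝ≥0∞) (a : α) :
    f a * μ {a} ≤ ∫⁻ x, f x ∂μ :=
  (lintegral_singleton f a).symm.trans_le (setLIntegral_le_lintegral _ _)

lemma IsIEMerging.mul_prod_le_one {K : ℕ} {F : (Fin K → ℝ) → ℝ} (hF : IsIEMerging K F)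
    {e : Fin K → ℝ} (he : ∀ k, 0 ≤ e k) (p : Fin K → I) (hep : ∀ k, e k * p k ≤ 1) :
    F e * ∏ k, (p k : ℝ) ≤ 1 := by
  obtain ⟨-, -, hF_nonneg, hF_test⟩ := hF
  let μ (k : Fin K) : Measure Bool := Ber(true, false, p k)
  let X (k : Fin K) (b : Bool) : ℝ := bif b then e k else 0
  let E (k : Fin K) (ω : Fin K → Bool) : ℝ := X k (ω k)
  have hE_nonneg (k : Fin K) (ω : Fin K → Bool) : 0 ≤ E k ω := by
    simp only [E, X]
    cases ω k <;> simp [he k]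
  have hE_indep : iIndepFun E (Measure.pi μ) := iIndepFun_pi fun _ => .of_discrete
  have hE_mean (k : Fin K) : ∫⁻ ω, ENNReal.ofReal (E k ω) ∂Measure.pi μ ≤ 1 := by
    refine ((measurePreserving_eval μ k).lintegral_comp
      (f := fun b => ENNReal.ofReal (X k b)) .of_discrete).trans_le ?_
    simp only [μ, X, lintegral_bernoulliMeasure, cond_true, cond_false, ENNReal.ofReal_zero,
      mul_zero, add_zero]
    rw [← ENNReal.ofReal_coe_nnreal, coe_toNNReal, ← ENNReal.ofReal_mul (p k).2.1,
      ENNReal.ofReal_le_one, mul_comm]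
    exact hep k
  have hμ_top : Measure.pi μ {fun _ => true} = ENNReal.ofReal (∏ k, (p k : ℝ)) := by
    rw [Measure.pi_singleton, ENNReal.ofReal_prod_of_nonneg fun k _ => (p k).2.1]
    refine Finset.prod_congr rfl fun k _ => ?_
    rw [bernoulliMeasure_apply_of_mem_of_notMem _ (measurableSet_singleton _) rfl (by simp),
      ← ENNReal.ofReal_coe_nnreal, coe_toNNReal]
  have h := (mul_measure_singleton_le_lintegral (Measure.pi μ) _ fun _ => true).trans
    (hF_test _ (Measure.pi μ) inferInstance E (fun _ => .of_discrete) hE_nonneg hE_indep hE_mean)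
  simpa [E, X, hμ_top, ← ENNReal.ofReal_mul (hF_nonneg _)] using h

/-- the product weakly dominates every ie-merging function: if `F` is an
ie-merging function and `e ∈ [1,∞)^K`, then `F(e) ≤ e₁⋯e_K`. -/
theorem product_weakly_dominates
    (K : ℕ) (F : (Fin K → ℝ) → ℝ) (hF : IsIEMerging K F) :
    ∀ e : Fin K → ℝ, (∀ k, 1 ≤ e k) → F e ≤ ∏ k, e k := by
  intro e he
  have he_pos (k : Fin K) : 0 < e k := one_pos.trans_le (he k)
  let p (k : Fin K) : I := ⟨(e k)⁻¹, inv_nonneg.2 (he_pos k).le, inv_le_one_of_one_le₀ (he k)⟩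
  have h := hF.mul_prod_le_one (fun k => (he_pos k).le) p
    fun k => (mul_inv_cancel₀ (he_pos k).ne').le
  rwa [Finset.prod_inv_distrib, ← div_eq_mul_inv,
    div_le_one (Finset.prod_pos fun k _ => he_pos k)] at h
end

section
/- The Bonferroni p-merging function (p₁,…,p_K) ↦ min(K·min(p₁,…,p_K), 1) is a p-merging function and is admissible: it is not strictly dominated by any p-merging function. -/
open MeasureTheory
open scoped ENNReal NNReal BigOperators

/-- A p-merging function: an increasing Borel function `F : [0,1]^K → [0,1]` mapping any
`K` (arbitrarily dependent) p-variables to a p-variable. -/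
def IsPMerging (K : ℕ) (F : (Fin K → ℝ) → ℝ) : Prop :=
  Monotone F ∧ Measurable F ∧
  (∀ p : Fin K → ℝ, (∀ k, p k ∈ Set.Icc (0:ℝ) 1) → F p ∈ Set.Icc (0:ℝ) 1) ∧
  ∀ (Ω : Type) [MeasurableSpace Ω] (Q : Measure Ω), IsProbabilityMeasure Q →
    ∀ P : Fin K → Ω → ℝ, (∀ k, Measurable (P k)) →
      (∀ k ω, P k ω ∈ Set.Icc (0:ℝ) 1) →
      (∀ k, ∀ ε ∈ Set.Ioo (0:ℝ) 1, Q {ω | P k ω ≤ ε} ≤ ENNReal.ofReal ε) →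
      ∀ ε ∈ Set.Ioo (0:ℝ) 1, Q {ω | F (fun k => P k ω) ≤ ε} ≤ ENNReal.ofReal ε


lemma finInf_le {K : ℕ} (p : Fin K → ℝ) (k : Fin K) :
    (⨅ j, p j) ≤ p k :=
  ciInf_le (Set.Finite.bddBelow (Set.finite_range p)) k

lemma finInf_exists {K : ℕ} (hne : Nonempty (Fin K)) (p : Fin K → ℝ) :
    ∃ k, (⨅ j, p j) = p k := by
  obtain ⟨k, hk⟩ := Finite.exists_min p
  exact ⟨k, le_antisymm (finInf_le p k) (le_ciInf hk)⟩

lemma bonferroni_merging (K : ℕ) (hK : 2 ≤ K) :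
    IsPMerging K (fun p => min ((K : ℝ) * ⨅ k, p k) 1) := by
  haveI hne : Nonempty (Fin K) := ⟨⟨0, by omega⟩⟩
  have hK0 : (0:ℝ) < K := by positivity
  refine ⟨?_, ?_, ?_, ?_⟩
  · intro p q hpq
    exact min_le_min (mul_le_mul_of_nonneg_left
      (ciInf_mono (Set.Finite.bddBelow (Set.finite_range p)) hpq) hK0.le) le_rfl
  · exact ((measurable_const.mul (Measurable.iInf fun k => measurable_pi_apply k)).min
      measurable_const)
  · intro p hp
    exact ⟨le_min (mul_nonneg hK0.le (le_ciInf fun k => (hp k).1)) zero_le_one,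
      min_le_right _ _⟩
  · intro Ω _ Q hQ P hmeas hrange hpvar ε hε
    have hεK : ε / K ∈ Set.Ioo (0:ℝ) 1 := by
      constructor
      · exact div_pos hε.1 hK0
      · calc ε / K ≤ ε / 1 := by
              apply div_le_div_of_nonneg_left hε.1.le one_pos
              exact_mod_cast by omega
           _ < 1 := by simpa using hε.2
    have hsub : {ω | min ((K : ℝ) * ⨅ k, P k ω) 1 ≤ ε} ⊆ ⋃ k, {ω | P k ω ≤ ε / K} := by
      intro ω hω
      simp only [Set.mem_setOf_eq] at hω
      have h1 : (K : ℝ) * ⨅ k, P k ω ≤ ε := by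
        rcases min_le_iff.mp hω with h | h
        · exact h
        · linarith [hε.2]
      have h2 : (⨅ k, P k ω) ≤ ε / K := by
        rw [le_div_iff₀ hK0]; linarith [h1]
      obtain ⟨k, hk⟩ := finInf_exists hne (fun k => P k ω)
      exact Set.mem_iUnion.mpr ⟨k, by simpa [← hk] using h2⟩
    calc Q {ω | min ((K : ℝ) * ⨅ k, P k ω) 1 ≤ ε} ≤ Q (⋃ k, {ω | P k ω ≤ ε / K}) :=
          measure_mono hsub
      _ ≤ ∑' k : Fin K, Q {ω | P k ω ≤ ε / K} := measure_iUnion_le _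
      _ ≤ ∑' k : Fin K, ENNReal.ofReal (ε / K) := by
          exact ENNReal.tsum_le_tsum fun k => hpvar k _ hεK
      _ = K * ENNReal.ofReal (ε / K) := by
          rw [tsum_fintype]; simp [Finset.sum_const, Finset.card_univ, mul_comm]
      _ = ENNReal.ofReal ε := by
          rw [← ENNReal.ofReal_natCast K, ← ENNReal.ofReal_mul (by positivity)]
          congr 1
          field_simp

set_option maxHeartbeats 1000000 in
lemma bonferroni_adm (K : ℕ) (hK : 2 ≤ K) :
    ¬ ∃ G, IsPMerging K G ∧
      (∀ p : Fin K → ℝ, (∀ k, p k ∈ Set.Icc (0:ℝ) 1) →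
        G p ≤ min ((K : ℝ) * ⨅ k, p k) 1) ∧
      (∃ p : Fin K → ℝ, (∀ k, p k ∈ Set.Icc (0:ℝ) 1) ∧
        G p < min ((K : ℝ) * ⨅ k, p k) 1) := by
  rintro ⟨G, ⟨Gmono, Gmeas, Grange, Gpvar⟩, hdom, p, hp, hlt⟩
  haveI hne : Nonempty (Fin K) := ⟨⟨0, by omega⟩⟩
  have hK0 : (0:ℝ) < K := by positivity
  set m : ℝ := ⨅ k, p k with hmdef
  have hm0 : 0 ≤ m := le_ciInf fun k => (hp k).1
  have hm1 : m ≤ 1 := (finInf_le p ⟨0, by omega⟩).trans (hp _).2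
  set q : Fin K → ℝ := fun _ => m with hqdef
  have hq : ∀ k, q k ∈ Set.Icc (0:ℝ) 1 := fun k => ⟨hm0, hm1⟩
  set t := G q with htdef
  have ht0 : 0 ≤ t := (Grange q hq).1
  have hqp : q ≤ p := fun k => finInf_le p k
  have htc : t < min ((K:ℝ)*m) 1 := lt_of_le_of_lt (Gmono hqp) hlt
  have hm0' : 0 < m := by nlinarith [min_le_left ((K:ℝ)*m) 1]
  set c := min ((K:ℝ)*m) 1 with hcdef
  have hc1 : c ≤ 1 := min_le_right _ _
  have hcKm : c ≤ (K:ℝ)*m := min_le_left _ _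
  set δ : ℝ := (t + c)/2 with hδdef
  have hδt : t < δ := by simp only [hδdef]; linarith
  have hδc : δ < c := by simp only [hδdef]; linarith
  have hδ0 : 0 < δ := lt_of_le_of_lt ht0 hδt
  have hδ1 : δ < 1 := lt_of_lt_of_le hδc hc1
  have hδKm : δ/K < m := (div_lt_iff₀ hK0).mpr (by nlinarith)
  have hδK0 : 0 < δ/K := div_pos hδ0 hK0
  set η : ℝ := min (m - δ/K) (1-δ) / 2 with hηdef
  have hη0 : 0 < η := by
    have h1 : 0 < m - δ/K := by linarith
    have h2 : 0 < 1 - δ := by linarith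
    simp only [hηdef]; positivity
  have hη1 : δ/K + η ≤ m := by
    have := min_le_left (m - δ/K) (1-δ); simp only [hηdef]; linarith
  have hη2 : δ + η < 1 := by
    have := min_le_right (m - δ/K) (1-δ); simp only [hηdef]; linarith
  -- the probability space
  set Q : Measure ℝ := volume.restrict (Set.Ioc (0:ℝ) 1) with hQdef
  haveI hQprob : IsProbabilityMeasure Q := by
    constructor
    rw [hQdef, Measure.restrict_apply_univ, Real.volume_Ioc]
    norm_num
  -- the p-variables
  set P : Fin K → ℝ → ℝ := fun k ω =>
    if ω ∈ Set.Ioc (((k:ℕ):ℝ) * (δ/K)) (((k:ℕ):ℝ) * (δ/K) + δ/K) then ω - ((k:ℕ):ℝ) * (δ/K)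
    else if ω ∈ Set.Ioc δ (δ+η) then m else 1 with hPdef
  have Pmeas : ∀ k, Measurable (P k) := by
    intro k
    apply Measurable.ite measurableSet_Ioc (measurable_id.sub_const _)
    exact Measurable.ite measurableSet_Ioc measurable_const measurable_const
  have Prange : ∀ k ω, P k ω ∈ Set.Icc (0:ℝ) 1 := by
    intro k ω
    simp only [hPdef]
    split_ifs with h1 h2
    · obtain ⟨ha, hb⟩ := h1
      constructor <;> [linarith; linarith [hδKm, hm1]]
    · exact ⟨hm0, hm1⟩
    · exact ⟨zero_le_one, le_refl 1⟩
  have Ppvar : ∀ k, ∀ x ∈ Set.Ioo (0:ℝ) 1, Q {ω | P k ω ≤ x} ≤ ENNReal.ofReal x := by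
    intro k x hx
    set a : ℝ := ((k:ℕ):ℝ) * (δ/K) with hadef
    rw [hQdef, Measure.restrict_apply' measurableSet_Ioc]
    rcases lt_or_ge x m with hxm | hmx
    · -- x < m : only the uniform part contributes
      have hsub : {ω | P k ω ≤ x} ∩ Set.Ioc (0:ℝ) 1 ⊆ Set.Ioc a (a + x) := by
        rintro ω ⟨hω, hΩ⟩
        simp only [Set.mem_setOf_eq, hPdef] at hω
        split_ifs at hω with h1 h2
        · exact ⟨h1.1, by linarith⟩
        · linarith
        · linarith [hx.2]
      calc volume ({ω | P k ω ≤ x} ∩ Set.Ioc (0:ℝ) 1) ≤ volume (Set.Ioc a (a+x)) :=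
            measure_mono hsub
        _ = ENNReal.ofReal x := by rw [Real.volume_Ioc]; ring_nf
    · -- m ≤ x
      have hsub : {ω | P k ω ≤ x} ∩ Set.Ioc (0:ℝ) 1 ⊆
          Set.Ioc a (a + δ/K) ∪ Set.Ioc δ (δ+η) := by
        rintro ω ⟨hω, hΩ⟩
        simp only [Set.mem_setOf_eq, hPdef] at hω
        split_ifs at hω with h1 h2
        · exact Or.inl h1
        · exact Or.inr h2
        · linarith [hx.2]
      calc volume ({ω | P k ω ≤ x} ∩ Set.Ioc (0:ℝ) 1)
          ≤ volume (Set.Ioc a (a + δ/K) ∪ Set.Ioc δ (δ+η)) := measure_mono hsub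
        _ ≤ volume (Set.Ioc a (a + δ/K)) + volume (Set.Ioc δ (δ+η)) := measure_union_le _ _
        _ = ENNReal.ofReal (δ/K) + ENNReal.ofReal η := by
            rw [Real.volume_Ioc, Real.volume_Ioc]; ring_nf
        _ = ENNReal.ofReal (δ/K + η) := (ENNReal.ofReal_add hδK0.le hη0.le).symm
        _ ≤ ENNReal.ofReal x := ENNReal.ofReal_le_ofReal (by linarith)
  -- now apply the p-merging property of G
  have hmain := Gpvar ℝ Q hQprob P Pmeas Prange Ppvar δ ⟨hδ0, hδ1⟩
  have hsub : Set.Ioc (0:ℝ) (δ+η) ⊆ {ω | G (fun k => P k ω) ≤ δ} := by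
    intro ω hω
    simp only [Set.mem_setOf_eq]
    rcases le_or_gt ω δ with hωδ | hωδ
    · -- ω is in one of the K uniform blocks
      set x : ℝ := ω * K / δ with hxdef
      have hx0 : 0 < x := by
        have := hω.1; simp only [hxdef]; positivity
      have hxK : x ≤ K := by
        rw [hxdef, div_le_iff₀ hδ0]; nlinarith
      set n : ℕ := ⌈x⌉₊ with hndef
      have hn1 : 1 ≤ n := Nat.ceil_pos.mpr hx0
      have hnK : n ≤ K := by
        rw [hndef]; exact Nat.ceil_le.mpr (by exact_mod_cast hxK)
      set k : Fin K := ⟨n-1, by omega⟩ with hkdef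
      have hcast : ((k:ℕ):ℝ) = (n:ℝ) - 1 := by
        simp only [hkdef]
        push_cast [Nat.cast_sub hn1]
        ring
      have hk1 : (n:ℝ) - 1 < x := by
        have h : (n-1 : ℕ) < ⌈x⌉₊ := by omega
        have := Nat.lt_ceil.mp h
        push_cast [Nat.cast_sub hn1] at this ⊢
        linarith
      have hk2 : x ≤ (n:ℝ) := Nat.le_ceil x
      -- so ω ∈ C_k
      have hmem : ω ∈ Set.Ioc (((k:ℕ):ℝ) * (δ/K)) (((k:ℕ):ℝ) * (δ/K) + δ/K) := by
        rw [hcast]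
        constructor
        · have : ((n:ℝ)-1) * (δ/K) < (ω*K/δ) * (δ/K) := by
            apply mul_lt_mul_of_pos_right hk1 hδK0
          calc ((n:ℝ)-1) * (δ/K) < (ω*K/δ) * (δ/K) := this
            _ = ω := by field_simp
        · have : x * (δ/K) ≤ (n:ℝ) * (δ/K) := mul_le_mul_of_nonneg_right hk2 hδK0.le
          have hxω : x * (δ/K) = ω := by rw [hxdef]; field_simp
          nlinarith
      have hPk : P k ω = ω - ((k:ℕ):ℝ) * (δ/K) := by
        simp only [hPdef, if_pos hmem]
      have hPkle : P k ω ≤ δ/K := by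
        rw [hPk]; linarith [hmem.2]
      have hG := hdom (fun j => P j ω) (fun j => Prange j ω)
      calc G (fun j => P j ω) ≤ min ((K:ℝ) * ⨅ j, P j ω) 1 := hG
        _ ≤ (K:ℝ) * ⨅ j, P j ω := min_le_left _ _
        _ ≤ (K:ℝ) * P k ω :=
            mul_le_mul_of_nonneg_left (finInf_le (fun j => P j ω) k) hK0.le
        _ ≤ (K:ℝ) * (δ/K) := mul_le_mul_of_nonneg_left hPkle hK0.le
        _ = δ := by field_simp
    · -- ω ∈ D : all coordinates equal m
      have hall : (fun j => P j ω) = q := by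
        funext j
        have hnot : ω ∉ Set.Ioc (((j:ℕ):ℝ) * (δ/K)) (((j:ℕ):ℝ) * (δ/K) + δ/K) := by
          intro hmem
          have hjK : ((j:ℕ):ℝ) + 1 ≤ K := by exact_mod_cast j.isLt
          have : ((j:ℕ):ℝ) * (δ/K) + δ/K ≤ δ := by
            have : (((j:ℕ):ℝ) + 1) * (δ/K) ≤ (K:ℝ) * (δ/K) :=
              mul_le_mul_of_nonneg_right hjK hδK0.le
            have hKδ : (K:ℝ) * (δ/K) = δ := by field_simp
            nlinarith
          linarith [hmem.2]
        have hD : ω ∈ Set.Ioc δ (δ+η) := ⟨hωδ, hω.2⟩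
        simp only [hPdef, if_neg hnot, if_pos hD, hqdef]
      rw [hall]
      exact le_of_lt hδt
  have hlow : ENNReal.ofReal (δ + η) ≤ Q {ω | G (fun k => P k ω) ≤ δ} := by
    have h1 : Q (Set.Ioc (0:ℝ) (δ+η)) = ENNReal.ofReal (δ+η) := by
      rw [hQdef, Measure.restrict_apply' measurableSet_Ioc,
        Set.inter_eq_left.mpr (Set.Ioc_subset_Ioc le_rfl (by linarith)), Real.volume_Ioc]
      ring_nf
    calc ENNReal.ofReal (δ + η) = Q (Set.Ioc (0:ℝ) (δ+η)) := h1.symm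
      _ ≤ Q {ω | G (fun k => P k ω) ≤ δ} := measure_mono hsub
  have : δ + η ≤ δ := by
    have := hlow.trans hmain
    rwa [ENNReal.ofReal_le_ofReal_iff hδ0.le] at this
  linarith

/-- the Bonferroni function `p ↦ min(K·min(p₁,…,p_K), 1)` is a p-merging
function and is admissible: no p-merging function strictly dominates it. -/
theorem bonferroni_admissible (K : ℕ) (hK : 2 ≤ K) :
    IsPMerging K (fun p => min ((K : ℝ) * ⨅ k, p k) 1) ∧
    ¬ ∃ G, IsPMerging K G ∧
      (∀ p : Fin K → ℝ, (∀ k, p k ∈ Set.Icc (0:ℝ) 1) →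
        G p ≤ min ((K : ℝ) * ⨅ k, p k) 1) ∧
      (∃ p : Fin K → ℝ, (∀ k, p k ∈ Set.Icc (0:ℝ) 1) ∧
        G p < min ((K : ℝ) * ⨅ k, p k) 1) := by
  exact ⟨bonferroni_merging K hK, bonferroni_adm K hK⟩
end

section
/- For r ∈ (−∞,1], the power mean M_{r,K}(e₁,…,e_K) = ((e₁^r+⋯+e_K^r)/K)^{1/r} is an e-merging function; for r ∈ (1,∞), the function K^{1/r−1}·M_{r,K} = K^{−1}(e₁^r+⋯+e_K^r)^{1/r} is an e-merging function. In both cases the function is pointwise dominated by the arithmetic mean M_K. -/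
open MeasureTheory
open scoped ENNReal NNReal BigOperators

/-- An e-merging function with values in `[0,∞]` (arbitrary dependence). -/
def IsEMergingE (K : ℕ) (F : (Fin K → ℝ≥0∞) → ℝ≥0∞) : Prop :=
  Monotone F ∧ Measurable F ∧
  ∀ (Ω : Type) [MeasurableSpace Ω] (Q : Measure Ω), IsProbabilityMeasure Q →
    ∀ E : Fin K → Ω → ℝ≥0∞, (∀ k, Measurable (E k)) →
      (∀ k, ∫⁻ ω, E k ω ∂Q ≤ 1) →
      ∫⁻ ω, F (fun k => E k ω) ∂Q ≤ 1

/-!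
The arithmetic mean of e-variables is an e-variable by linearity of the integral, so any monotone
measurable function dominated by it is e-merging. The domination is the power-mean inequality
`M_r ≤ M_1`: for `0 < r ≤ 1` it is Jensen's inequality for `t ↦ t ^ (1 / r)` applied to the
`e_k ^ r`; for `r < 0` it goes through the geometric mean, `M_r ≤ M_0 ≤ M_1`, both steps being
AM–GM (applied to the `e_k ^ r` and to the `e_k`); for `r > 1` it reduces to
`(∑ e_k ^ r) ^ (1 / r) ≤ ∑ e_k`, i.e. superadditivity of `t ↦ t ^ r`.
-/

namespace ENNReal

theorem rpow_le_rpow_of_nonpos {x y : ℝ≥0∞} {z : ℝ} (hxy : x ≤ y) (hz : z ≤ 0) :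
    y ^ z ≤ x ^ z := by
  simpa only [← rpow_neg, neg_neg] using
    ENNReal.inv_le_inv.mpr (rpow_le_rpow hxy (neg_nonneg.mpr hz))

theorem sum_rpow_le_rpow_sum {ι : Type*} (s : Finset ι) (f : ι → ℝ≥0∞) {p : ℝ} (hp : 1 ≤ p) :
    ∑ i ∈ s, f i ^ p ≤ (∑ i ∈ s, f i) ^ p := by
  induction s using Finset.cons_induction with
  | empty => simp [zero_rpow_of_pos (zero_lt_one.trans_le hp)]
  | cons a s ha ih =>
    simp only [Finset.sum_cons]
    exact (add_le_add_right ih _).trans (add_rpow_le_rpow_add _ _ hp)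

end ENNReal

theorem NNReal.weighted_rpow_mean_le_arith_mean_of_neg {ι : Type*} (s : Finset ι)
    (w x : ι → ℝ≥0) (hw : ∑ i ∈ s, w i = 1) (hx : ∀ i ∈ s, 0 < x i) {r : ℝ} (hr : r < 0) :
    (∑ i ∈ s, w i * x i ^ r) ^ (1 / r) ≤ ∑ i ∈ s, w i * x i := by
  set G := ∏ i ∈ s, x i ^ (w i : ℝ)
  have hG : 0 < G := Finset.prod_pos fun i hi => rpow_pos (hx i hi)
  have hGr : G ^ r ≤ ∑ i ∈ s, w i * x i ^ r := by
    calc G ^ r = ∏ i ∈ s, (x i ^ r) ^ (w i : ℝ) := by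
          simp only [G, ← finsetProd_rpow, ← rpow_mul, mul_comm]
      _ ≤ _ := geom_mean_le_arith_mean_weighted s w _ hw
  calc (∑ i ∈ s, w i * x i ^ r) ^ (1 / r) ≤ (G ^ r) ^ (1 / r) :=
        rpow_le_rpow_of_nonpos (rpow_pos hG) hGr (one_div_neg.mpr hr).le
    _ = G := rpow_inv_rpow_self hr.ne G
    _ ≤ ∑ i ∈ s, w i * x i := geom_mean_le_arith_mean_weighted s w x hw

namespace ENNReal

open Finset

variable {ι : Type*} [Fintype ι]

theorem rpow_sum_rpow_one_div_le_sum {p : ℝ} (hp : 1 ≤ p) (e : ι → ℝ≥0∞) :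
    (∑ i, e i ^ p) ^ (1 / p) ≤ ∑ i, e i := by
  calc (∑ i, e i ^ p) ^ (1 / p) ≤ ((∑ i, e i) ^ p) ^ (1 / p) := by
        gcongr
        exact sum_rpow_le_rpow_sum _ _ hp
    _ = ∑ i, e i := by rw [one_div, rpow_rpow_inv (zero_lt_one.trans_le hp).ne']

theorem monotone_rpow_mean {r : ℝ} (hr : r ≠ 0) (c : ℝ≥0∞) :
    Monotone fun e : ι → ℝ≥0∞ => ((∑ i, e i ^ r) / c) ^ (1 / r) := by
  intro a b hab
  rcases hr.lt_or_gt with hneg | hpos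
  · refine rpow_le_rpow_of_nonpos ?_ (one_div_neg.mpr hneg).le
    exact ENNReal.div_le_div_right (sum_le_sum fun i _ => rpow_le_rpow_of_nonpos (hab i) hneg.le) c
  · dsimp only
    gcongr with i
    exact hab i

theorem monotone_rpow_sum_rpow_div {r : ℝ} (hr : 0 < r) (c : ℝ≥0∞) :
    Monotone fun e : ι → ℝ≥0∞ => (∑ i, e i ^ r) ^ (1 / r) / c := by
  intro a b hab
  dsimp only
  gcongr with i
  exact hab i

variable [Nonempty ι]

theorem rpow_mean_le_arith_mean_of_neg {r : ℝ} (hr : r < 0) (e : ι → ℝ≥0∞) :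
    ((∑ i, e i ^ r) / Fintype.card ι) ^ (1 / r) ≤ (∑ i, e i) / Fintype.card ι := by
  by_cases h0 : ∃ i, e i = 0
  · obtain ⟨i, hi⟩ := h0
    have : ∑ j, e j ^ r = ⊤ := sum_eq_top.mpr ⟨i, mem_univ i, by rw [hi, zero_rpow_of_neg hr]⟩
    rw [this, top_div_of_ne_top (natCast_ne_top _), top_rpow_of_neg (one_div_neg.mpr hr)]
    exact zero_le
  by_cases htop : ∃ i, e i = ⊤
  · obtain ⟨i, hi⟩ := htop
    have : ∑ j, e j = ⊤ := sum_eq_top.mpr ⟨i, mem_univ i, hi⟩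
    rw [this, top_div_of_ne_top (natCast_ne_top _)]
    exact le_top
  push Not at h0 htop
  lift e to ι → ℝ≥0 using htop
  have hpos (i : ι) : 0 < e i := pos_iff_ne_zero.mpr (by simpa using h0 i)
  have hcard : (Fintype.card ι : ℝ≥0) ≠ 0 := by simp
  have key := NNReal.weighted_rpow_mean_le_arith_mean_of_neg univ
    (fun _ => (Fintype.card ι : ℝ≥0)⁻¹) e (by simp) (fun i _ => hpos i) hr
  rw [← mul_sum, ← mul_sum, inv_mul_eq_div, inv_mul_eq_div] at key
  have hS : (∑ i, e i ^ r) / (Fintype.card ι : ℝ≥0) ≠ 0 :=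
    div_ne_zero (sum_pos (fun i _ => NNReal.rpow_pos (hpos i)) univ_nonempty).ne' hcard
  simp only [← coe_rpow_of_ne_zero (hpos _).ne']
  rw [← coe_natCast, ← ofNNReal_finsetSum, ← ofNNReal_finsetSum, ← coe_div hcard,
    ← coe_div hcard, ← coe_rpow_of_ne_zero hS]
  exact_mod_cast key

theorem rpow_mean_le_arith_mean_of_pos {r : ℝ} (hr0 : 0 < r) (hr1 : r ≤ 1) (e : ι → ℝ≥0∞) :
    ((∑ i, e i ^ r) / Fintype.card ι) ^ (1 / r) ≤ (∑ i, e i) / Fintype.card ι := by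
  have key := rpow_arith_mean_le_arith_mean_rpow univ (fun _ => (Fintype.card ι : ℝ≥0∞)⁻¹)
    (fun i => e i ^ r) (by simp [ENNReal.mul_inv_cancel]) ((one_le_div hr0).mpr hr1)
  simp only [← rpow_mul, mul_one_div_cancel hr0.ne', rpow_one] at key
  rwa [← mul_sum, ← mul_sum, ← ENNReal.div_eq_inv_mul, ← ENNReal.div_eq_inv_mul] at key

theorem rpow_mean_le_arith_mean {r : ℝ} (hr0 : r ≠ 0) (hr1 : r ≤ 1) (e : ι → ℝ≥0∞) :
    ((∑ i, e i ^ r) / Fintype.card ι) ^ (1 / r) ≤ (∑ i, e i) / Fintype.card ι := by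
  rcases hr0.lt_or_gt with hneg | hpos
  · exact rpow_mean_le_arith_mean_of_neg hneg e
  · exact rpow_mean_le_arith_mean_of_pos hpos hr1 e

end ENNReal

theorem lintegral_arith_mean_le_one {Ω ι : Type*} [MeasurableSpace Ω] [Fintype ι]
    (Q : Measure Ω) (E : ι → Ω → ℝ≥0∞) (hE : ∀ i, Measurable (E i))
    (h1 : ∀ i, ∫⁻ ω, E i ω ∂Q ≤ 1) :
    ∫⁻ ω, (∑ i, E i ω) / Fintype.card ι ∂Q ≤ 1 := by
  simp_rw [div_eq_mul_inv]
  rw [lintegral_mul_const _ (Finset.measurable_sum _ fun i _ => hE i),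
    lintegral_finsetSum _ fun i _ => hE i, ← div_eq_mul_inv]
  refine ENNReal.div_le_of_le_mul ?_
  calc ∑ i, ∫⁻ ω, E i ω ∂Q ≤ ∑ _i : ι, 1 := Finset.sum_le_sum fun i _ => h1 i
    _ = 1 * Fintype.card ι := by simp

theorem isEMergingE_of_le_arith_mean {K : ℕ} {F : (Fin K → ℝ≥0∞) → ℝ≥0∞} (hF : Monotone F)
    (hF_meas : Measurable F) (hF_le : ∀ e, F e ≤ (∑ k, e k) / K) : IsEMergingE K F := by
  refine ⟨hF, hF_meas, fun Ω _ Q _ E hE h1 => ?_⟩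
  calc ∫⁻ ω, F (fun k => E k ω) ∂Q ≤ ∫⁻ ω, (∑ k, E k ω) / Fintype.card (Fin K) ∂Q := by
        simpa using lintegral_mono fun ω => hF_le fun k => E k ω
    _ ≤ 1 := lintegral_arith_mean_le_one Q E hE h1

/-- for `r ∈ (−∞,1]`, `r ≠ 0`, the power mean
`M_{r,K}(e) = ((e₁^r+⋯+e_K^r)/K)^{1/r}` is an e-merging function; for `r > 1`,
`K^{1/r−1}·M_{r,K}(e) = (e₁^r+⋯+e_K^r)^{1/r}/K` is an e-merging function. In both
cases the function is pointwise dominated by the arithmetic mean. -/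
theorem power_mean_e_merging (K : ℕ) (hK : 2 ≤ K) :
    (∀ r : ℝ, r ≠ 0 → r ≤ 1 →
      IsEMergingE K (fun e => ((∑ k, e k ^ r) / (K : ℝ≥0∞)) ^ (1 / r)) ∧
      ∀ e : Fin K → ℝ≥0∞,
        ((∑ k, e k ^ r) / (K : ℝ≥0∞)) ^ (1 / r) ≤ (∑ k, e k) / (K : ℝ≥0∞)) ∧
    (∀ r : ℝ, 1 < r →
      IsEMergingE K (fun e => (∑ k, e k ^ r) ^ (1 / r) / (K : ℝ≥0∞)) ∧
      ∀ e : Fin K → ℝ≥0∞,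
        (∑ k, e k ^ r) ^ (1 / r) / (K : ℝ≥0∞) ≤ (∑ k, e k) / (K : ℝ≥0∞)) := by
  have : NeZero K := ⟨by omega⟩
  refine ⟨fun r hr0 hr1 => ?_, fun r hr => ?_⟩
  · have hle (e : Fin K → ℝ≥0∞) :
        ((∑ k, e k ^ r) / (K : ℝ≥0∞)) ^ (1 / r) ≤ (∑ k, e k) / (K : ℝ≥0∞) := by
      simpa using ENNReal.rpow_mean_le_arith_mean hr0 hr1 e
    exact ⟨isEMergingE_of_le_arith_mean (ENNReal.monotone_rpow_mean hr0 _) (by fun_prop) hle, hle⟩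
  · have hle (e : Fin K → ℝ≥0∞) :
        (∑ k, e k ^ r) ^ (1 / r) / (K : ℝ≥0∞) ≤ (∑ k, e k) / (K : ℝ≥0∞) :=
      ENNReal.div_le_div_right (ENNReal.rpow_sum_rpow_one_div_le_sum hr.le e) _
    exact ⟨isEMergingE_of_le_arith_mean (ENNReal.monotone_rpow_sum_rpow_div (by linarith) _)
      (by fun_prop) hle, hle⟩
end

section
/- Let H₁,…,H_K be composite null hypotheses with e-variables E₁,…,E_K (E^Q[E_k] ≤ 1 for all Q ∈ H_k). Define the adjusted e-variables E*_k := min over subsets I ⊆ {1,…,K} containing k of (1/|I|)·Σ_{i∈I} E_i. Then E*₁,…,E*_K are family-wise valid: the conditional e-variable E_Q := (1/|I_Q|)·Σ_{k∈I_Q} E_k with I_Q := {k : Q ∈ H_k} (and E_Q := 1 when I_Q = ∅) satisfies E^Q[E_Q] ≤ 1 for every probability measure Q, and E_Q ≥ E*_k whenever Q ∈ H_k. -/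
open MeasureTheory
open scoped ENNReal NNReal BigOperators

/-- Let `H₁,…,H_K` be composite null hypotheses (sets of probability
measures) with e-variables `E₁,…,E_K` (`E^Q[E_k] ≤ 1` for all `Q ∈ H_k`). The adjusted
e-variables `E*_k = min_{I ∋ k} (1/|I|)·Σ_{i∈I} E_i` are family-wise valid, witnessed
by `E_Q = (1/|I_Q|)·Σ_{k∈I_Q} E_k` with `I_Q = {k : Q ∈ H_k}` (and `E_Q = 1` when
`I_Q = ∅`): `E^Q[E_Q] ≤ 1` for every probability measure `Q`, and `E_Q ≥ E*_k`
whenever `Q ∈ H_k`. -/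
theorem adjusted_e_values_fwv
    {Ω : Type*} [MeasurableSpace Ω] (K : ℕ)
    (H : Fin K → Set (Measure Ω))
    (hprob : ∀ k, ∀ Q ∈ H k, IsProbabilityMeasure Q)
    (E : Fin K → Ω → ℝ≥0∞) (hEmeas : ∀ k, Measurable (E k))
    (hE : ∀ k, ∀ Q ∈ H k, ∫⁻ ω, E k ω ∂Q ≤ 1) :
    ∀ (Q : Measure Ω), IsProbabilityMeasure Q →
      ∀ IQ : Finset (Fin K), (∀ k, k ∈ IQ ↔ Q ∈ H k) →
        (∫⁻ ω, (if IQ = ∅ then 1 else (∑ k ∈ IQ, E k ω) / (IQ.card : ℝ≥0∞)) ∂Q ≤ 1) ∧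
        (∀ k ∈ IQ, ∀ ω,
          (⨅ (I : Finset (Fin K)) (_ : k ∈ I), (∑ i ∈ I, E i ω) / (I.card : ℝ≥0∞))
            ≤ (if IQ = ∅ then 1 else (∑ k ∈ IQ, E k ω) / (IQ.card : ℝ≥0∞))) := by
  intro Q hQ IQ hIQ
  constructor
  · by_cases h : IQ = ∅
    · simp [h, hQ.measure_univ]
    · simp only [h, if_false]
      have hcard : (0:ℝ≥0∞) < IQ.card := by
        simpa using Finset.card_pos.mpr (Finset.nonempty_of_ne_empty h)
      calc ∫⁻ ω, (∑ k ∈ IQ, E k ω) / (IQ.card : ℝ≥0∞) ∂Q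
          = (∫⁻ ω, ∑ k ∈ IQ, E k ω ∂Q) / (IQ.card : ℝ≥0∞) := by
            simp [div_eq_mul_inv, lintegral_mul_const _
              (Finset.measurable_sum IQ (fun k _ => hEmeas k))]
        _ ≤ (∑ k ∈ IQ, (1:ℝ≥0∞)) / (IQ.card : ℝ≥0∞) := by
            refine ENNReal.div_le_div_right ?_ _
            rw [lintegral_finset_sum _ (fun k _ => hEmeas k)]
            exact Finset.sum_le_sum (fun k hk => hE k Q ((hIQ k).1 hk))
        _ = 1 := by
            simp [ENNReal.div_self hcard.ne' (by simp)]
  · intro k hk ω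
    have h : IQ ≠ ∅ := Finset.ne_empty_of_mem hk
    simp only [h, if_false]
    exact iInf_le_of_le IQ (iInf_le_of_le hk le_rfl)
end
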